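/- For every β > 0 and every integer m ≥ 1, S_m + 1 ≤ 2·T_m, where S_m = Σ_{j=1}^m e^{−2βj} and T_m = (Σ_{j=1}^m j·e^{−2βj})/S_m. Equivalently, for every real x ∈ (0,1) and every integer m ≥ 1, 1 − (2m+1)x^m + (2m+1)x^{m+1} − x^{2m+1} ≥ 0. -/

import Mathlib

/-!
With `x = e^{-2β} ∈ (0,1)` we have `S_m + 1 = ∑_{j=0}^m x^j`, and after clearing the
denominators `S_m` and `(1 - x)²` the claim becomes `x · P(x) ≥ 0`, where
`P(x) = 1 - (2m+1)x^m + (2m+1)x^{m+1} - x^{2m+1}`. In turn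
`P(x) = (1 - x) (∑_{k=0}^{2m} x^k - (2m+1) x^m)`, and the second factor is nonnegative
because AM-GM gives `x^k + x^{2m-k} ≥ 2 x^m` for each pair of reflected terms.
-/

namespace SOS

/-- `S_m = Σ_{j=1}^m e^{-2βj}`, with `S_0 = 0`. -/
noncomputable def S (β : ℝ) (m : ℕ) : ℝ :=
  ∑ j ∈ Finset.Icc 1 m, Real.exp (-(2 * β) * (j : ℝ))

/-- `T_m = (Σ_{j=1}^m j e^{-2βj}) / S_m`. -/
noncomputable def T (β : ℝ) (m : ℕ) : ℝ :=
  (∑ j ∈ Finset.Icc 1 m, (j : ℝ) * Real.exp (-(2 * β) * (j : ℝ))) / S β m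

open Finset

section OrderedRing

variable {R : Type*} [CommRing R] [LinearOrder R] [IsStrictOrderedRing R]

lemma two_mul_le_add_of_mul_eq_sq {u v w : R} (hu : 0 ≤ u) (hv : 0 ≤ v)
    (h : u * v = w ^ 2) : 2 * w ≤ u + v := by
  nlinarith [four_mul_le_sq_add u v]

lemma two_mul_pow_le_pow_add_pow_sub {x : R} (hx : 0 ≤ x) {m k : ℕ} (hk : k ≤ 2 * m) :
    2 * x ^ m ≤ x ^ k + x ^ (2 * m - k) :=
  two_mul_le_add_of_mul_eq_sq (by positivity) (by positivity) <| by
    rw [← pow_add, ← pow_mul, Nat.add_sub_cancel' hk, mul_comm]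

lemma mul_pow_le_sum_range_pow {x : R} (hx : 0 ≤ x) (m : ℕ) :
    (2 * m + 1) * x ^ m ≤ ∑ k ∈ range (2 * m + 1), x ^ k := by
  have hreflect : ∑ k ∈ range (2 * m + 1), x ^ (2 * m - k) = ∑ k ∈ range (2 * m + 1), x ^ k := by
    simpa using sum_range_reflect (x ^ ·) (2 * m + 1)
  have hpairs : ∑ _k ∈ range (2 * m + 1), 2 * x ^ m
      ≤ ∑ k ∈ range (2 * m + 1), (x ^ k + x ^ (2 * m - k)) :=
    sum_le_sum fun k hk => two_mul_pow_le_pow_add_pow_sub hx (by simp at hk; omega)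
  rw [sum_add_distrib, hreflect, sum_const, card_range, nsmul_eq_mul] at hpairs
  push_cast at hpairs
  linarith

lemma one_sub_pow_add_pow_succ_sub_pow_nonneg {x : R} (hx₀ : 0 ≤ x) (hx₁ : x ≤ 1) (m : ℕ) :
    0 ≤ 1 - (2 * (m : R) + 1) * x ^ m + (2 * (m : R) + 1) * x ^ (m + 1) - x ^ (2 * m + 1) := by
  have hfactor : 1 - (2 * (m : R) + 1) * x ^ m + (2 * (m : R) + 1) * x ^ (m + 1)
      - x ^ (2 * m + 1)
      = (1 - x) * (∑ k ∈ range (2 * m + 1), x ^ k - (2 * m + 1) * x ^ m) := by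
    linear_combination geom_sum_mul x (2 * m + 1)
  rw [hfactor]
  exact mul_nonneg (by linarith) (by linarith [mul_pow_le_sum_range_pow hx₀ m])

lemma one_sub_mul_sum_Icc_pow (x : R) (m : ℕ) :
    (1 - x) * ∑ j ∈ Icc 1 m, x ^ j = x - x ^ (m + 1) := by
  induction m with
  | zero => simp
  | succ n ih =>
    rw [sum_Icc_succ_top (by omega)]
    linear_combination ih

lemma one_sub_sq_mul_sum_Icc_mul_pow (x : R) (m : ℕ) :
    (1 - x) ^ 2 * ∑ j ∈ Icc 1 m, (j : R) * x ^ j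
      = x - (m + 1) * x ^ (m + 1) + m * x ^ (m + 2) := by
  induction m with
  | zero => simp
  | succ n ih =>
    rw [sum_Icc_succ_top (by omega)]
    push_cast
    linear_combination ih

lemma sum_Icc_pow_add_one_mul_self_le {x : R} (hx₀ : 0 ≤ x) (hx₁ : x < 1) (m : ℕ) :
    (∑ j ∈ Icc 1 m, x ^ j + 1) * ∑ j ∈ Icc 1 m, x ^ j ≤ 2 * ∑ j ∈ Icc 1 m, (j : R) * x ^ j := by
  have hS := one_sub_mul_sum_Icc_pow x m
  have hN := one_sub_sq_mul_sum_Icc_mul_pow x m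
  have hP := mul_nonneg hx₀ (one_sub_pow_add_pow_succ_sub_pow_nonneg hx₀ hx₁.le m)
  refine le_of_mul_le_mul_right ?_ (pow_pos (sub_pos.2 hx₁) 2)
  have hdiff : 2 * (∑ j ∈ Icc 1 m, (j : R) * x ^ j) * (1 - x) ^ 2
      - (∑ j ∈ Icc 1 m, x ^ j + 1) * (∑ j ∈ Icc 1 m, x ^ j) * (1 - x) ^ 2
      = x * (1 - (2 * (m : R) + 1) * x ^ m + (2 * (m : R) + 1) * x ^ (m + 1)
          - x ^ (2 * m + 1)) := by
    linear_combination 2 * hN - ((1 - x) * ∑ j ∈ Icc 1 m, x ^ j + x - x ^ (m + 1) + (1 - x)) * hS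
  linarith

end OrderedRing

/-- `S_m + 1 ≤ 2 T_m`; equivalently, `1 - (2m+1)x^m + (2m+1)x^{m+1} - x^{2m+1} ≥ 0`
for all `x ∈ (0,1)`. -/
theorem S_add_one_le_two_T (β : ℝ) (hβ : 0 < β) (m : ℕ) (hm : 1 ≤ m) :
    S β m + 1 ≤ 2 * T β m ∧
      ∀ x : ℝ, 0 < x → x < 1 →
        0 ≤ 1 - (2 * (m : ℝ) + 1) * x ^ m + (2 * (m : ℝ) + 1) * x ^ (m + 1)
              - x ^ (2 * m + 1) := by
  refine ⟨?_, fun x hx₀ hx₁ => one_sub_pow_add_pow_succ_sub_pow_nonneg hx₀.le hx₁.le m⟩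
  set x := Real.exp (-(2 * β))
  have hx₀ : 0 < x := Real.exp_pos _
  have hx₁ : x < 1 := Real.exp_lt_one_iff.2 (by linarith)
  have hexp (j : ℕ) : Real.exp (-(2 * β) * j) = x ^ j := by
    rw [mul_comm, Real.exp_nat_mul]
  have hS : S β m = ∑ j ∈ Icc 1 m, x ^ j := sum_congr rfl fun j _ => hexp j
  have hT : T β m = (∑ j ∈ Icc 1 m, (j : ℝ) * x ^ j) / ∑ j ∈ Icc 1 m, x ^ j := by
    rw [T, hS]
    exact congrArg (· / _) (sum_congr rfl fun j _ => by rw [hexp j])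
  have hS_pos : 0 < ∑ j ∈ Icc 1 m, x ^ j :=
    sum_pos (fun j _ => pow_pos hx₀ j) ⟨1, mem_Icc.2 ⟨le_rfl, hm⟩⟩
  rw [hS, hT, mul_div_assoc', le_div_iff₀ hS_pos]
  exact sum_Icc_pow_add_one_mul_self_le hx₀.le hx₁ m

end SOS
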